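/- arXiv:1707.04002 — 2 statements merged into one kernel-verified Lean document; each statement's English description precedes it below -/
import Mathlib

section
/- (Polar coordinates on a homogeneous group) Let |·| be a homogeneous quasi-norm on a homogeneous group G of homogeneous dimension Q. Then there exists a unique positive Borel measure σ on the unit sphere 𝔖 = {x ∈ G : |x| = 1} such that for all f ∈ L¹(G), ∫_G f(x) dx = ∫₀^∞ ∫_𝔖 f(D_r y) r^{Q−1} dσ(y) dr. -/
/-!
Write `Q` for the homogeneous dimension and `proj x = D_{1/|x|} x` for the radial projection onto
the unit sphere `𝔖`, and put `σ(E) = Q · |{x : |x| ≤ 1, proj x ∈ E}|`. Since `D_t` scales Lebesgue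
measure by `t^Q` and commutes with `proj`, the image of Lebesgue measure under `x ↦ (|x|, proj x)`
gives `(-∞, t] × E` the mass `t^Q σ(E) / Q = (r^{Q-1} dr ⊗ σ)((-∞, t] × E)`, so this image is the
product measure `r^{Q-1} dr ⊗ σ`. As `x ↦ (|x|, proj x)` is inverted by `(r, y) ↦ D_r y`, the
formula is Fubini's theorem for that product. Conversely, testing the formula on the indicator of
`{x : |x| ≤ 1, proj x ∈ E}` recovers `σ(E)`.
-/

open MeasureTheory Set

open scoped ENNReal

theorem MeasureTheory.Measure.ext_of_Iic_of_Iic_zero_eq_zero {μ ν : Measure ℝ} (hμ₀ : μ (Iic 0) = 0)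
    (hν₀ : ν (Iic 0) = 0) (hfin : ∀ t, μ (Iic t) ≠ ∞)
    (h : ∀ t, 0 < t → μ (Iic t) = ν (Iic t)) : μ = ν := by
  have hIic : ∀ t, μ (Iic t) = ν (Iic t) := by
    intro t
    rcases le_or_gt t 0 with ht | ht
    · rw [measure_mono_null (Iic_subset_Iic.2 ht) hμ₀, measure_mono_null (Iic_subset_Iic.2 ht) hν₀]
    · exact h t ht
  refine Measure.ext_of_Ioc' μ ν
    (fun a b _ => ne_top_of_le_ne_top (hfin b) (measure_mono Ioc_subset_Iic_self)) fun a b hab => ?_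
  rw [← Iic_sdiff_Iic, measure_sdiff (Iic_subset_Iic.2 hab.le) nullMeasurableSet_Iic (hfin a),
    measure_sdiff (Iic_subset_Iic.2 hab.le) nullMeasurableSet_Iic (hIic a ▸ hfin a), hIic a, hIic b]

namespace HomogeneousGroup

section Radial

variable {Q : ℝ}

theorem integral_Ioc_zero_rpow_sub_one (hQ : 0 < Q) {t : ℝ} (ht : 0 ≤ t) :
    ∫ r in Ioc 0 t, r ^ (Q - 1) = t ^ Q / Q := by
  rw [← intervalIntegral.integral_of_le ht, integral_rpow (Or.inl (by linarith)),
    sub_add_cancel, Real.zero_rpow hQ.ne', sub_zero]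

variable (Q) in
noncomputable def radialMeasure : Measure ℝ :=
  (volume.restrict (Ioi 0)).withDensity fun r => ENNReal.ofReal (r ^ (Q - 1))

instance : SigmaFinite (radialMeasure Q) := by
  unfold radialMeasure; infer_instance

theorem radialMeasure_Iic (hQ : 0 < Q) {t : ℝ} (ht : 0 ≤ t) :
    radialMeasure Q (Iic t) = ENNReal.ofReal (t ^ Q / Q) := by
  rw [radialMeasure, withDensity_apply _ measurableSet_Iic,
    Measure.restrict_restrict measurableSet_Iic,
    Iic_inter_Ioi, ← integral_Ioc_zero_rpow_sub_one hQ ht, ofReal_integral_eq_lintegral_ofReal]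
  · exact (intervalIntegral.intervalIntegrable_rpow' (by linarith)).1
  · filter_upwards [ae_restrict_mem measurableSet_Ioc] with r hr
    exact Real.rpow_nonneg hr.1.le _

theorem integral_radialMeasure {E : Type*} [NormedAddCommGroup E] [NormedSpace ℝ E] (g : ℝ → E) :
    ∫ r, g r ∂radialMeasure Q = ∫ r in Ioi 0, r ^ (Q - 1) • g r := by
  rw [radialMeasure, integral_withDensity_eq_integral_toReal_smul (by fun_prop)
    (ae_of_all _ fun _ => ENNReal.ofReal_lt_top)]
  refine setIntegral_congr_fun measurableSet_Ioi fun r hr => ?_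
  rw [ENNReal.toReal_ofReal (Real.rpow_nonneg (le_of_lt hr) _)]

end Radial

variable {ι : Type*}

noncomputable def dil (v : ι → ℝ) (r : ℝ) (x : ι → ℝ) : ι → ℝ := fun j => r ^ v j * x j

def homDim [Fintype ι] (v : ι → ℝ) : ℝ := ∑ j, v j

section Dilation

variable {v : ι → ℝ}

@[simp] theorem dil_apply (r : ℝ) (x : ι → ℝ) (j : ι) : dil v r x j = r ^ v j * x j := rfl

@[simp] theorem dil_zero_right (r : ℝ) : dil v r 0 = 0 := by
  ext j; simp

@[simp] theorem dil_one (x : ι → ℝ) : dil v 1 x = x := by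
  ext j; simp

theorem dil_zero_left (hv : ∀ j, v j ≠ 0) (x : ι → ℝ) : dil v 0 x = 0 := by
  ext j; simp [Real.zero_rpow (hv j)]

theorem dil_dil {r s : ℝ} (hr : 0 ≤ r) (hs : 0 ≤ s) (x : ι → ℝ) :
    dil v r (dil v s x) = dil v (r * s) x := by
  ext j; simp only [dil_apply, Real.mul_rpow hr hs]; ring

theorem dil_inv_dil {r : ℝ} (hr : 0 < r) (x : ι → ℝ) : dil v r⁻¹ (dil v r x) = x := by
  rw [dil_dil (inv_nonneg.2 hr.le) hr.le, inv_mul_cancel₀ hr.ne', dil_one]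

theorem dil_dil_inv {r : ℝ} (hr : 0 < r) (x : ι → ℝ) : dil v r (dil v r⁻¹ x) = x := by
  rw [dil_dil hr.le (inv_nonneg.2 hr.le), mul_inv_cancel₀ hr.ne', dil_one]

theorem continuous_dil (r : ℝ) : Continuous (dil v r) :=
  continuous_pi fun j => continuous_const.mul (continuous_apply j)

theorem continuous_dil_left (hv : ∀ j, 0 ≤ v j) (x : ι → ℝ) : Continuous fun r => dil v r x :=
  continuous_pi fun j => (Real.continuous_rpow_const (hv j)).mul continuous_const

theorem measurable_dil_uncurry [Fintype ι] : Measurable fun p : ℝ × (ι → ℝ) => dil v p.1 p.2 :=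
  measurable_pi_lambda _ fun j => by simp only [dil_apply]; fun_prop

theorem measurable_dil_uncurry_subtype [Fintype ι] (p : (ι → ℝ) → Prop) :
    Measurable fun q : ℝ × Subtype p => dil v q.1 q.2 :=
  measurable_dil_uncurry.comp (measurable_fst.prodMk (measurable_subtype_coe.comp measurable_snd))

theorem volume_image_dil [Fintype ι] {r : ℝ} (hr : 0 < r) (s : Set (ι → ℝ)) :
    volume (dil v r '' s) = ENNReal.ofReal (r ^ homDim v) * volume s := by
  classical
  have hdil : ⇑(Matrix.toLin' (Matrix.diagonal fun j => r ^ v j)) = dil v r := by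
    ext x j; simp [Matrix.mulVec_diagonal]
  rw [← hdil, Measure.addHaar_image_linearMap, LinearMap.det_toLin', Matrix.det_diagonal,
    abs_of_pos (Finset.prod_pos fun j _ => Real.rpow_pos_of_pos hr _), homDim,
    Real.rpow_sum_of_pos hr]

theorem homDim_pos [Fintype ι] [Nonempty ι] (hv : ∀ j, 0 < v j) : 0 < homDim v :=
  Finset.sum_pos (fun j _ => hv j) Finset.univ_nonempty

end Dilation

structure IsHomogeneousQuasiNorm (v : ι → ℝ) (N : (ι → ℝ) → ℝ) : Prop where
  weight_pos : ∀ j, 0 < v j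
  continuous : Continuous N
  nonneg : ∀ x, 0 ≤ N x
  eq_zero_iff : ∀ x, N x = 0 ↔ x = 0
  map_dil : ∀ r, 0 < r → ∀ x, N (dil v r x) = r * N x

abbrev UnitSphere (N : (ι → ℝ) → ℝ) : Type _ := {x : ι → ℝ // N x = 1}

namespace IsHomogeneousQuasiNorm

variable {v : ι → ℝ} {N : (ι → ℝ) → ℝ}

theorem pos_of_ne_zero (hN : IsHomogeneousQuasiNorm v N) {x : ι → ℝ} (hx : x ≠ 0) : 0 < N x :=
  (hN.nonneg x).lt_of_ne' (mt (hN.eq_zero_iff x).1 hx)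

theorem apply_dil_inv_self (hN : IsHomogeneousQuasiNorm v N) {x : ι → ℝ} (hx : x ≠ 0) :
    N (dil v (N x)⁻¹ x) = 1 := by
  have h := hN.pos_of_ne_zero hx
  rw [hN.map_dil _ (inv_pos.2 h), inv_mul_cancel₀ h.ne']

theorem exists_pos_le_of_one_le_norm [Fintype ι] [Nonempty ι] (hN : IsHomogeneousQuasiNorm v N) :
    ∃ m > 0, ∀ x : ι → ℝ, 1 ≤ ‖x‖ → m ≤ N x := by
  obtain ⟨u, hu, hmin⟩ := (isCompact_sphere (0 : ι → ℝ) 1).exists_isMinOn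
    (NormedSpace.sphere_nonempty.2 zero_le_one) hN.continuous.continuousOn
  refine ⟨N u, hN.pos_of_ne_zero (ne_zero_of_mem_unit_sphere ⟨u, hu⟩), fun x hx => ?_⟩
  have hv₀ : ∀ j, v j ≠ 0 := fun j => (hN.weight_pos j).ne'
  obtain ⟨s, hs, hsx⟩ : ∃ s ∈ Icc (0 : ℝ) 1, ‖dil v s x‖ = 1 :=
    intermediate_value_Icc zero_le_one
      (continuous_dil_left (fun j => (hN.weight_pos j).le) x).norm.continuousOn
      ⟨by simp [dil_zero_left hv₀], by simpa using hx⟩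
  have hs₀ : 0 < s := hs.1.lt_of_ne (by rintro rfl; simp [dil_zero_left hv₀] at hsx)
  calc N u ≤ N (dil v s x) := hmin (mem_sphere_zero_iff_norm.2 hsx)
    _ = s * N x := hN.map_dil s hs₀ x
    _ ≤ N x := mul_le_of_le_one_left (hN.nonneg x) hs.2

theorem isCompact_sublevel [Fintype ι] [Nonempty ι] (hN : IsHomogeneousQuasiNorm v N) (c : ℝ) :
    IsCompact {x | N x ≤ c} := by
  obtain ⟨m, hm, hle⟩ := hN.exists_pos_le_of_one_le_norm
  set t := |c| / m + 1 with ht_def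
  have ht : 0 < t := by positivity
  refine ((isCompact_closedBall (0 : ι → ℝ) 1).image (continuous_dil t)).of_isClosed_subset
    (isClosed_le hN.continuous continuous_const) fun x hx => ⟨dil v t⁻¹ x, ?_, dil_dil_inv ht x⟩
  rw [mem_closedBall_zero_iff]
  by_contra! h
  have hmx := hle _ h.le
  rw [hN.map_dil _ (inv_pos.2 ht), inv_mul_eq_div, le_div_iff₀ ht, ht_def, mul_add,
    mul_div_cancel₀ _ hm.ne', mul_one] at hmx
  linarith [le_abs_self c, hx.out]

theorem volume_sublevel_lt_top [Fintype ι] [Nonempty ι] (hN : IsHomogeneousQuasiNorm v N) (c : ℝ) :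
    volume {x | N x ≤ c} < ∞ :=
  (hN.isCompact_sublevel c).measure_lt_top

theorem volume_sublevel_one_pos [Fintype ι] (hN : IsHomogeneousQuasiNorm v N) :
    0 < volume {x | N x ≤ 1} := by
  have h0 : N 0 = 0 := (hN.eq_zero_iff 0).2 rfl
  exact ((isOpen_lt hN.continuous continuous_const).measure_pos volume
    ⟨0, by simp [h0]⟩).trans_le (measure_mono fun x (hx : N x < 1) => hx.le)

open Classical in
/-- The value at `0` is an arbitrary point of the sphere; `{0}` is a null set. -/
noncomputable def proj [Nonempty ι] (hN : IsHomogeneousQuasiNorm v N) (x : ι → ℝ) : UnitSphere N :=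
  ⟨if x = 0 then dil v (N 1)⁻¹ 1 else dil v (N x)⁻¹ x, by
    split_ifs with hx
    exacts [hN.apply_dil_inv_self one_ne_zero, hN.apply_dil_inv_self hx]⟩

variable [Nonempty ι] (hN : IsHomogeneousQuasiNorm v N)

theorem coe_proj_of_ne_zero {x : ι → ℝ} (hx : x ≠ 0) : (hN.proj x : ι → ℝ) = dil v (N x)⁻¹ x := by
  simp [proj, hx]

theorem dil_proj (x : ι → ℝ) : dil v (N x) (hN.proj x) = x := by
  rcases eq_or_ne x 0 with rfl | hx
  · rw [(hN.eq_zero_iff 0).2 rfl, dil_zero_left fun j => (hN.weight_pos j).ne']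
  · rw [hN.coe_proj_of_ne_zero hx, dil_dil_inv (hN.pos_of_ne_zero hx)]

theorem proj_dil {r : ℝ} (hr : 0 < r) (x : ι → ℝ) : hN.proj (dil v r x) = hN.proj x := by
  rcases eq_or_ne x 0 with rfl | hx
  · rw [dil_zero_right]
  have hrx : dil v r x ≠ 0 := fun h => hx (by rw [← dil_inv_dil hr x, h, dil_zero_right])
  ext1
  rw [hN.coe_proj_of_ne_zero hx, hN.coe_proj_of_ne_zero hrx, hN.map_dil r hr,
    dil_dil (inv_nonneg.2 (mul_nonneg hr.le (hN.nonneg x))) hr.le, mul_inv, mul_right_comm,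
    inv_mul_cancel₀ hr.ne', one_mul]

theorem proj_coe (y : UnitSphere N) : hN.proj y = y := by
  have hy : (y : ι → ℝ) ≠ 0 := fun h => by simpa [h, (hN.eq_zero_iff 0).2 rfl] using y.2
  ext1
  rw [hN.coe_proj_of_ne_zero hy, y.2, inv_one, dil_one]

theorem measurable_proj [Fintype ι] : Measurable hN.proj := by
  have hN_meas := hN.continuous.measurable
  refine Measurable.subtype_mk
    (Measurable.ite (p := (· = 0)) (measurableSet_singleton 0) measurable_const ?_)
  exact measurable_pi_lambda _ fun j => by simp only [dil_apply]; fun_prop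

theorem integral_indicator_proj_preimage_dil (σ : Measure (UnitSphere N))
    {E : Set (UnitSphere N)} (hE : MeasurableSet E) {r : ℝ} (hr : 0 < r) :
    ∫ y, ({x | N x ≤ 1} ∩ hN.proj ⁻¹' E).indicator (fun _ => (1 : ℂ)) (dil v r y) ∂σ
      = (Iic 1).indicator (fun _ => σ.real E • (1 : ℂ)) r := by
  have hmem : ∀ y : UnitSphere N, dil v r y ∈ {x | N x ≤ 1} ∩ hN.proj ⁻¹' E ↔ r ≤ 1 ∧ y ∈ E :=
    fun y => by simp [hN.map_dil r hr, y.2, hN.proj_dil hr, hN.proj_coe]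
  by_cases hr1 : r ≤ 1
  · rw [indicator_of_mem (show r ∈ Iic 1 from hr1), ← integral_indicator_const _ hE]
    congr 1
    ext y
    exact indicator_eq_indicator ((hmem y).trans (and_iff_right hr1)) rfl
  · rw [indicator_of_notMem (show r ∉ Iic 1 from hr1)]
    simp [indicator, hmem, hr1]

variable [Fintype ι]

noncomputable def sphereMeasure : Measure (UnitSphere N) :=
  ENNReal.ofReal (homDim v) • (volume.restrict {x | N x ≤ 1}).map hN.proj

theorem sphereMeasure_apply {E : Set (UnitSphere N)} (hE : MeasurableSet E) :
    hN.sphereMeasure E = ENNReal.ofReal (homDim v) * volume ({x | N x ≤ 1} ∩ hN.proj ⁻¹' E) := by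
  rw [sphereMeasure, Measure.smul_apply, Measure.map_apply hN.measurable_proj hE,
    Measure.restrict_apply (hN.measurable_proj hE), inter_comm, smul_eq_mul]

instance isFiniteMeasure_sphereMeasure : IsFiniteMeasure hN.sphereMeasure where
  measure_univ_lt_top := by
    rw [hN.sphereMeasure_apply MeasurableSet.univ]
    exact ENNReal.mul_lt_top ENNReal.ofReal_lt_top
      ((measure_mono inter_subset_left).trans_lt (hN.volume_sublevel_lt_top 1))

theorem volume_sublevel_inter_proj_preimage {t : ℝ} (ht : 0 < t) (E : Set (UnitSphere N)) :
    volume ({x | N x ≤ t} ∩ hN.proj ⁻¹' E)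
      = ENNReal.ofReal (t ^ homDim v) * volume ({x | N x ≤ 1} ∩ hN.proj ⁻¹' E) := by
  have hscale : {x | N x ≤ t} ∩ hN.proj ⁻¹' E = dil v t '' ({x | N x ≤ 1} ∩ hN.proj ⁻¹' E) := by
    rw [image_eq_preimage_of_inverse (dil_inv_dil ht) (dil_dil_inv ht)]
    ext x
    simp only [mem_inter_iff, mem_ofPred_eq, mem_preimage, hN.map_dil _ (inv_pos.2 ht),
      hN.proj_dil (inv_pos.2 ht), inv_mul_le_iff₀ ht, mul_one]
  rw [hscale, volume_image_dil ht]

theorem map_restrict_proj_preimage {E : Set (UnitSphere N)} (hE : MeasurableSet E) :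
    (volume.restrict (hN.proj ⁻¹' E)).map N = hN.sphereMeasure E • radialMeasure (homDim v) := by
  have hQ := homDim_pos hN.weight_pos
  have hmap : ∀ t, (volume.restrict (hN.proj ⁻¹' E)).map N (Iic t)
      = volume ({x | N x ≤ t} ∩ hN.proj ⁻¹' E) := fun t => by
    rw [Measure.map_apply hN.continuous.measurable measurableSet_Iic,
      Measure.restrict_apply (hN.continuous.measurable measurableSet_Iic)]
    rfl
  refine Measure.ext_of_Iic_of_Iic_zero_eq_zero ?_ ?_ (fun t => ?_) fun t ht => ?_
  · rw [hmap]
    refine measure_mono_null (fun x hx => ?_) (measure_singleton (0 : ι → ℝ))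
    exact (hN.eq_zero_iff x).1 (le_antisymm hx.1 (hN.nonneg x))
  · rw [Measure.smul_apply, radialMeasure_Iic hQ le_rfl, Real.zero_rpow hQ.ne', zero_div,
      ENNReal.ofReal_zero, smul_zero]
  · rw [hmap]
    exact ((measure_mono inter_subset_left).trans_lt (hN.volume_sublevel_lt_top t)).ne
  · rw [hmap, hN.volume_sublevel_inter_proj_preimage ht, Measure.smul_apply,
      radialMeasure_Iic hQ ht.le, hN.sphereMeasure_apply hE, smul_eq_mul, mul_right_comm,
      ← ENNReal.ofReal_mul hQ.le, mul_div_cancel₀ _ hQ.ne', mul_comm]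

theorem map_prodMk_proj_volume :
    volume.map (fun x => (N x, hN.proj x))
      = (radialMeasure (homDim v)).prod hN.sphereMeasure := by
  refine (Measure.prod_eq fun s E hs hE => ?_).symm
  rw [Measure.map_apply (hN.continuous.measurable.prodMk hN.measurable_proj) (hs.prod hE),
    mul_comm, ← smul_eq_mul, ← Measure.smul_apply, ← hN.map_restrict_proj_preimage hE,
    Measure.map_apply hN.continuous.measurable hs,
    Measure.restrict_apply (hN.continuous.measurable hs)]
  rfl

theorem map_dil_prod_sphereMeasure :
    ((radialMeasure (homDim v)).prod hN.sphereMeasure).map (fun p => dil v p.1 p.2) = volume := by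
  rw [← hN.map_prodMk_proj_volume, Measure.map_map (measurable_dil_uncurry_subtype _)
    (hN.continuous.measurable.prodMk hN.measurable_proj)]
  simp only [Function.comp_def, hN.dil_proj, Measure.map_id']

theorem integral_eq_integral_Ioi_integral_sphereMeasure {E : Type*} [NormedAddCommGroup E]
    [NormedSpace ℝ E] (f : (ι → ℝ) → E) (hf : Integrable f) :
    ∫ x, f x = ∫ r in Ioi 0, r ^ (homDim v - 1) • ∫ y, f (dil v r y) ∂hN.sphereMeasure := by
  have hΦ := (measurable_dil_uncurry_subtype (v := v) (N · = 1)).aemeasurable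
    (μ := (radialMeasure (homDim v)).prod hN.sphereMeasure)
  rw [← hN.map_dil_prod_sphereMeasure] at hf ⊢
  rw [integral_map hΦ hf.aestronglyMeasurable,
    integral_prod (fun p : ℝ × UnitSphere N => f (dil v p.1 p.2))
      ((integrable_map_measure hf.aestronglyMeasurable hΦ).1 hf), integral_radialMeasure]

theorem measureReal_eq_of_integral_eq {σ : Measure (UnitSphere N)}
    (hσ : ∀ f : (ι → ℝ) → ℂ, Integrable f →
      ∫ x, f x = ∫ r in Ioi 0, r ^ (homDim v - 1) • ∫ y, f (dil v r y) ∂σ)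
    {E : Set (UnitSphere N)} (hE : MeasurableSet E) :
    σ.real E = homDim v * volume.real ({x | N x ≤ 1} ∩ hN.proj ⁻¹' E) := by
  have hQ := homDim_pos hN.weight_pos
  set S := {x | N x ≤ 1} ∩ hN.proj ⁻¹' E
  have hS : MeasurableSet S :=
    (measurableSet_le hN.continuous.measurable measurable_const).inter (hN.measurable_proj hE)
  have hslice : ∀ r ∈ Ioi (0 : ℝ),
      r ^ (homDim v - 1) • ∫ y, S.indicator (fun _ => (1 : ℂ)) (dil v r y) ∂σ
        = (Iic 1).indicator (fun r => r ^ (homDim v - 1) • (σ.real E • (1 : ℂ))) r :=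
    fun r hr => by
      rw [hN.integral_indicator_proj_preimage_dil σ hE hr]
      exact (indicator_smul_apply (Iic 1) (· ^ (homDim v - 1)) (fun _ => σ.real E • (1 : ℂ)) r).symm
  have h := hσ _ ((integrable_indicator_iff hS).2
    (integrableOn_const (C := (1 : ℂ)) ((measure_mono inter_subset_left).trans_lt
      (hN.volume_sublevel_lt_top 1)).ne))
  rw [integral_indicator_const _ hS, setIntegral_congr_fun measurableSet_Ioi hslice,
    setIntegral_indicator measurableSet_Iic, Ioi_inter_Iic, integral_smul_const,
    integral_Ioc_zero_rpow_sub_one hQ zero_le_one, Real.one_rpow] at h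
  simp only [Complex.real_smul, mul_one] at h
  have h' : volume.real S = 1 / homDim v * σ.real E := by exact_mod_cast h
  field_simp at h'
  linarith

theorem eq_sphereMeasure_of_integral_eq {σ : Measure (UnitSphere N)}
    (hσ : ∀ f : (ι → ℝ) → ℂ, Integrable f →
      ∫ x, f x = ∫ r in Ioi 0, r ^ (homDim v - 1) • ∫ y, f (dil v r y) ∂σ) :
    σ = hN.sphereMeasure := by
  have hQ := homDim_pos hN.weight_pos
  -- otherwise `σ.real univ = 0`, which the formula for `E = univ` forbids
  have hσ_fin : IsFiniteMeasure σ := by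
    refine ⟨lt_top_iff_ne_top.2 fun htop => ?_⟩
    have h := hN.measureReal_eq_of_integral_eq hσ MeasurableSet.univ
    rw [measureReal_def, htop, ENNReal.toReal_top, preimage_univ, inter_univ, measureReal_def] at h
    exact (mul_pos hQ (ENNReal.toReal_pos hN.volume_sublevel_one_pos.ne'
      (hN.volume_sublevel_lt_top 1).ne)).ne h
  ext E hE
  rw [← ENNReal.toReal_eq_toReal_iff' (measure_ne_top σ E) (measure_ne_top _ E),
    ← measureReal_def, hN.measureReal_eq_of_integral_eq hσ hE, hN.sphereMeasure_apply hE,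
    ENNReal.toReal_mul, ENNReal.toReal_ofReal hQ.le, measureReal_def]

end IsHomogeneousQuasiNorm

end HomogeneousGroup

/-- Polar coordinates on a homogeneous group: there is a unique positive Borel
measure `σ` on the unit sphere `{x : N x = 1}` of a homogeneous quasi-norm `N`
such that `∫_G f = ∫₀^∞ ∫_𝔖 f(D_r y) r^{Q-1} dσ(y) dr` for all `f ∈ L¹(G)`. -/
theorem stmt_5 (n : ℕ) (hn : 0 < n) (v : Fin n → ℝ) (hv : ∀ j, 0 < v j)
    (N : (Fin n → ℝ) → ℝ) (hNc : Continuous N) (hNnn : ∀ x, 0 ≤ N x)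
    (hN0 : ∀ x, N x = 0 ↔ x = 0)
    (hNh : ∀ r : ℝ, 0 < r → ∀ x, N (fun j => r ^ v j * x j) = r * N x) :
    ∃! σ : Measure {x : Fin n → ℝ // N x = 1},
      ∀ f : (Fin n → ℝ) → ℂ, Integrable f →
        ∫ x, f x = ∫ r in Set.Ioi (0 : ℝ),
          (r ^ ((∑ j, v j) - 1)) •
            ∫ y : {x : Fin n → ℝ // N x = 1},
              f (fun j => r ^ v j * (y : Fin n → ℝ) j) ∂σ := by
  have : Nonempty (Fin n) := ⟨⟨0, hn⟩⟩
  have hN : HomogeneousGroup.IsHomogeneousQuasiNorm v N := ⟨hv, hNc, hNnn, hN0, hNh⟩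
  exact ⟨hN.sphereMeasure, hN.integral_eq_integral_Ioi_integral_sphereMeasure,
    fun σ hσ => hN.eq_sphereMeasure_of_integral_eq hσ⟩
end

section
/- (Mean value inequality on a homogeneous group) Fix a homogeneous quasi-norm |·| on a homogeneous group G with dilation weights v_1 ≤ ⋯ ≤ v_n. There exists a constant C > 0 such that for every f ∈ C¹(G) and every x ∈ G, |f(x) − f(0)| ≤ C Σ_{j=1}^n |x|^{v_j} sup_{y∈G} |X_j f(y)|, where X_1, …, X_n are the left-invariant vector fields given by a basis adapted to the gradation. -/
/-!
Put `A y = D(mul y)(0)` and `B y = D(mul (-y))(y)`. Left translation by `-y` inverts left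
translation by `y`, so `A y ∘ B y = id` and `Df(y) = (Df(y) ∘ A y) ∘ B y`, where the functional
`Df(y) ∘ A y` takes the values `X_j f(y)` on the standard basis. Since `B` is continuous, it is
bounded on the closed unit ball, and the mean value inequality in `ℝⁿ` gives
`|f u - f 0| ≤ C Σ_j sup |X_j f|` for `‖u‖ ≤ 1`. The dilations `δ_r` are automorphisms, so
`X_j (f ∘ δ_r) = r^{v_j} (X_j f) ∘ δ_r`; as the quasi-norm is bounded below on the unit sphere,
`δ_{1/r} x` lies in the unit ball for some `r` comparable to `|x|`, and applying the local
estimate to `f ∘ δ_r` at `δ_{1/r} x` gives the theorem.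
-/

open Set Finset Metric

section LeftTranslation

variable {E F : Type*} [NormedAddCommGroup E] [NormedSpace ℝ E]
  [NormedAddCommGroup F] [NormedSpace ℝ F] {mul : E → E → E}

theorem fderiv_mul_zero_comp_fderiv_mul_neg (hmul : ∀ a, Differentiable ℝ (mul a))
    (hassoc : ∀ x y z, mul (mul x y) z = mul x (mul y z))
    (hone : ∀ x, mul x 0 = x ∧ mul 0 x = x)
    (hinv : ∀ x, mul x (-x) = 0 ∧ mul (-x) x = 0) (y : E) :
    (fderiv ℝ (mul y) 0).comp (fderiv ℝ (mul (-y)) y) = ContinuousLinearMap.id ℝ E := by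
  have hcancel : mul y ∘ mul (-y) = id := funext fun z => by
    simp only [Function.comp_apply, id_eq, ← hassoc, (hinv y).1, (hone z).2]
  have hy : HasFDerivAt (mul y) (fderiv ℝ (mul y) 0) (mul (-y) y) := by
    rw [(hinv y).2]
    exact (hmul y 0).hasFDerivAt
  have h := hy.comp y (hmul (-y) y).hasFDerivAt
  rw [hcancel] at h
  exact h.unique (hasFDerivAt_id y)

theorem hasDerivAt_comp_mul_smul {f : E → F} {y : E} (hf : DifferentiableAt ℝ f y)
    (hmul : DifferentiableAt ℝ (mul y) 0) (hy : mul y 0 = y) (w : E) :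
    HasDerivAt (fun t : ℝ => f (mul y (t • w))) (fderiv ℝ f y (fderiv ℝ (mul y) 0 w)) 0 := by
  have hline : HasDerivAt (fun t : ℝ => t • w) w 0 := by
    simpa using (hasDerivAt_id (0 : ℝ)).smul_const w
  have hmul' : HasFDerivAt (mul y) (fderiv ℝ (mul y) 0) ((0 : ℝ) • w) := by
    simpa using hmul.hasFDerivAt
  have hf' : HasFDerivAt f (fderiv ℝ f y) (mul y ((0 : ℝ) • w)) := by
    simpa [hy] using hf.hasFDerivAt
  exact hf'.comp_hasDerivAt 0 (hmul'.comp_hasDerivAt 0 hline)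

theorem continuous_fderiv_mul_neg (hmul : ContDiff ℝ 1 fun p : E × E => mul p.1 p.2) :
    Continuous fun y => fderiv ℝ (mul (-y)) y :=
  (ContDiff.fderiv (f := fun y => mul (-y)) (n := 0)
    (hmul.comp (contDiff_neg.prodMap contDiff_id)) contDiff_id le_rfl).continuous

end LeftTranslation

section LeftInvariantDerivative

variable {ι : Type*} [Fintype ι] [DecidableEq ι] {mul : (ι → ℝ) → (ι → ℝ) → (ι → ℝ)}

theorem ContinuousLinearMap.norm_le_sum_abs_apply_single (ℓ : (ι → ℝ) →L[ℝ] ℝ) :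
    ‖ℓ‖ ≤ ∑ i, |ℓ (Pi.single i 1)| := by
  refine ℓ.opNorm_le_bound (by positivity) fun w => ?_
  calc ‖ℓ w‖ = ‖∑ i, w i * ℓ (Pi.single i 1)‖ := by
        conv_lhs => rw [pi_eq_sum_univ' w]
        simp [map_sum]
    _ ≤ ∑ i, |w i| * |ℓ (Pi.single i 1)| := by
        simpa only [Real.norm_eq_abs, abs_mul] using
          norm_sum_le univ fun i => w i * ℓ (Pi.single i 1)
    _ ≤ ∑ i, ‖w‖ * |ℓ (Pi.single i 1)| := by
        gcongr with i
        exact norm_le_pi_norm w i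
    _ = (∑ i, |ℓ (Pi.single i 1)|) * ‖w‖ := by rw [← mul_sum, mul_comm]

theorem norm_fderiv_le_of_abs_deriv_le (hmul : ∀ a, Differentiable ℝ (mul a))
    (hassoc : ∀ x y z, mul (mul x y) z = mul x (mul y z))
    (hone : ∀ x, mul x 0 = x ∧ mul 0 x = x)
    (hinv : ∀ x, mul x (-x) = 0 ∧ mul (-x) x = 0)
    {f : (ι → ℝ) → ℝ} {y : ι → ℝ} (hf : DifferentiableAt ℝ f y) (M : ι → ℝ)
    (hM : ∀ j, |deriv (fun t : ℝ => f (mul y (t • (Pi.single j 1 : ι → ℝ)))) 0| ≤ M j) :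
    ‖fderiv ℝ f y‖ ≤ (∑ j, M j) * ‖fderiv ℝ (mul (-y)) y‖ := by
  set A := fderiv ℝ (mul y) 0
  set B := fderiv ℝ (mul (-y)) y
  have hXj : ∀ j, |(fderiv ℝ f y).comp A (Pi.single j 1)| ≤ M j := fun j => by
    rw [ContinuousLinearMap.comp_apply,
      ← (hasDerivAt_comp_mul_smul hf (hmul y 0) (hone y).1 _).deriv]
    exact hM j
  calc ‖fderiv ℝ f y‖ = ‖((fderiv ℝ f y).comp A).comp B‖ := by
        rw [ContinuousLinearMap.comp_assoc,
          fderiv_mul_zero_comp_fderiv_mul_neg hmul hassoc hone hinv, ContinuousLinearMap.comp_id]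
    _ ≤ ‖(fderiv ℝ f y).comp A‖ * ‖B‖ := ContinuousLinearMap.opNorm_comp_le _ _
    _ ≤ (∑ j, M j) * ‖B‖ := by
        gcongr
        exact ((fderiv ℝ f y).comp A).norm_le_sum_abs_apply_single.trans
          (sum_le_sum fun j _ => hXj j)

theorem exists_abs_sub_le_of_norm_le_one
    (hmul : ContDiff ℝ 1 fun p : (ι → ℝ) × (ι → ℝ) => mul p.1 p.2)
    (hassoc : ∀ x y z, mul (mul x y) z = mul x (mul y z))
    (hone : ∀ x, mul x 0 = x ∧ mul 0 x = x)
    (hinv : ∀ x, mul x (-x) = 0 ∧ mul (-x) x = 0) :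
    ∃ C : ℝ, 0 < C ∧ ∀ f : (ι → ℝ) → ℝ, ContDiff ℝ 1 f → ∀ M : ι → ℝ,
      (∀ j y, |deriv (fun t : ℝ => f (mul y (t • (Pi.single j 1 : ι → ℝ)))) 0| ≤ M j) →
        ∀ u, ‖u‖ ≤ 1 → |f u - f 0| ≤ C * ∑ j, M j := by
  obtain ⟨C, hC⟩ := (isCompact_closedBall (0 : ι → ℝ) 1).exists_bound_of_continuousOn
    (continuous_fderiv_mul_neg hmul).continuousOn
  refine ⟨max C 1, by positivity, fun f hf M hM u hu => ?_⟩
  have hdiff : Differentiable ℝ f := hf.differentiable one_ne_zero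
  have hmul' : ∀ a, Differentiable ℝ (mul a) := fun a =>
    (hmul.comp (contDiff_const.prodMk contDiff_id)).differentiable one_ne_zero
  have hM0 : 0 ≤ ∑ j, M j := sum_nonneg fun j _ => (abs_nonneg _).trans (hM j 0)
  have hbound : ∀ y ∈ closedBall (0 : ι → ℝ) 1, ‖fderiv ℝ f y‖ ≤ max C 1 * ∑ j, M j :=
    fun y hy => (norm_fderiv_le_of_abs_deriv_le hmul' hassoc hone hinv (hdiff y) M
      (fun j => hM j y)).trans (by rw [mul_comm]; gcongr; exact (hC y hy).trans (le_max_left _ _))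
  have hu' : u ∈ closedBall (0 : ι → ℝ) 1 := mem_closedBall_zero_iff.mpr hu
  calc |f u - f 0| ≤ (max C 1 * ∑ j, M j) * ‖u - 0‖ :=
        (convex_closedBall _ _).norm_image_sub_le_of_norm_fderiv_le (fun y _ => hdiff y) hbound
          (mem_closedBall_self zero_le_one) hu'
    _ ≤ max C 1 * ∑ j, M j := by
        rw [sub_zero]
        exact mul_le_of_le_one_right (by positivity) hu

end LeftInvariantDerivative

section Dilation

variable {ι : Type*} (v : ι → ℝ)

noncomputable def dilate (r : ℝ) (x : ι → ℝ) : ι → ℝ := fun j => r ^ v j * x j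

variable {v}

@[simp]
theorem dilate_zero_right (r : ℝ) : dilate v r 0 = 0 := by
  ext j
  simp [dilate]

theorem dilate_dilate {r s : ℝ} (hr : 0 ≤ r) (hs : 0 ≤ s) (x : ι → ℝ) :
    dilate v r (dilate v s x) = dilate v (r * s) x := by
  ext j
  simp only [dilate, Real.mul_rpow hr hs, mul_assoc]

theorem dilate_zero_left (hv : ∀ j, v j ≠ 0) (x : ι → ℝ) : dilate v 0 x = 0 := by
  ext j
  simp [dilate, Real.zero_rpow (hv j)]

theorem dilate_one_left (x : ι → ℝ) : dilate v 1 x = x := by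
  ext j
  simp [dilate]

theorem dilate_smul_single [DecidableEq ι] (r t : ℝ) (j : ι) :
    dilate v r (t • Pi.single j 1) = (r ^ v j * t) • Pi.single j 1 := by
  ext k
  rcases eq_or_ne k j with rfl | hk
  · simp [dilate]
  · simp [dilate, hk]

theorem continuous_dilate_left (hv : ∀ j, 0 ≤ v j) (x : ι → ℝ) :
    Continuous fun r => dilate v r x :=
  continuous_pi fun j => (Real.continuous_rpow_const (hv j)).mul continuous_const

theorem contDiff_dilate [Fintype ι] {n : WithTop ℕ∞} (r : ℝ) : ContDiff ℝ n (dilate v r) :=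
  contDiff_pi.mpr fun j => contDiff_const.mul (contDiff_apply ℝ ℝ j)

theorem exists_norm_dilate_eq_one [Fintype ι] (hv : ∀ j, 0 < v j) {x : ι → ℝ}
    (hx : 1 ≤ ‖x‖) : ∃ r ∈ Ioc (0 : ℝ) 1, ‖dilate v r x‖ = 1 := by
  have hIVT := intermediate_value_Icc zero_le_one
    ((continuous_dilate_left (fun j => (hv j).le) x).norm.continuousOn)
  rw [dilate_zero_left (fun j => (hv j).ne'), dilate_one_left, norm_zero] at hIVT
  obtain ⟨r, ⟨hr0, hr1⟩, hr⟩ := hIVT ⟨zero_le_one, hx⟩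
  refine ⟨r, ⟨lt_of_le_of_ne hr0 ?_, hr1⟩, hr⟩
  rintro rfl
  simp [dilate_zero_left (fun j => (hv j).ne')] at hr

theorem exists_pos_norm_le_one_of_lt [Fintype ι] (hv : ∀ j, 0 < v j) (N : (ι → ℝ) → ℝ)
    (hNc : Continuous N) (hNnn : ∀ x, 0 ≤ N x) (hN0 : ∀ x, N x = 0 ↔ x = 0)
    (hNh : ∀ r : ℝ, 0 < r → ∀ x, N (dilate v r x) = r * N x) :
    ∃ m : ℝ, 0 < m ∧ ∀ x, N x < m → ‖x‖ ≤ 1 := by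
  have hpos : ∀ y ∈ sphere (0 : ι → ℝ) 1, 0 < N y := fun y hy =>
    (hNnn y).lt_of_ne' fun h => ne_zero_of_mem_unit_sphere ⟨y, hy⟩ ((hN0 y).mp h)
  obtain ⟨m, hm, hmN⟩ := (isCompact_sphere (0 : ι → ℝ) 1).exists_forall_le' hNc.continuousOn hpos
  refine ⟨m, hm, fun x hx => le_of_not_gt fun hx1 => hx.not_ge ?_⟩
  obtain ⟨r, ⟨hr0, hr1⟩, hr⟩ := exists_norm_dilate_eq_one hv hx1.le
  calc m ≤ N (dilate v r x) := hmN _ (mem_sphere_zero_iff_norm.mpr hr)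
    _ = r * N x := hNh r hr0 x
    _ ≤ N x := mul_le_of_le_one_left (hNnn x) hr1

theorem deriv_comp_dilate_mul [DecidableEq ι] {mul : (ι → ℝ) → (ι → ℝ) → (ι → ℝ)} {r : ℝ}
    (hdil : ∀ x y, dilate v r (mul x y) = mul (dilate v r x) (dilate v r y))
    (f : (ι → ℝ) → ℝ) (y : ι → ℝ) (j : ι) :
    deriv (fun t : ℝ => f (dilate v r (mul y (t • Pi.single j 1)))) 0 =
      r ^ v j * deriv (fun s : ℝ => f (mul (dilate v r y) (s • Pi.single j 1))) 0 := by
  simp only [hdil, dilate_smul_single]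
  simpa using deriv_comp_mul_left (r ^ v j)
    (fun s : ℝ => f (mul (dilate v r y) (s • Pi.single j 1))) 0

theorem abs_comp_dilate_sub_le [Fintype ι] [DecidableEq ι] {mul : (ι → ℝ) → (ι → ℝ) → (ι → ℝ)}
    {r C : ℝ} (hr : 0 < r)
    (hdil : ∀ x y, dilate v r (mul x y) = mul (dilate v r x) (dilate v r y))
    (hlocal : ∀ f : (ι → ℝ) → ℝ, ContDiff ℝ 1 f → ∀ M : ι → ℝ,
      (∀ j y, |deriv (fun t : ℝ => f (mul y (t • (Pi.single j 1 : ι → ℝ)))) 0| ≤ M j) →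
        ∀ u, ‖u‖ ≤ 1 → |f u - f 0| ≤ C * ∑ j, M j)
    {f : (ι → ℝ) → ℝ} (hf : ContDiff ℝ 1 f) {M : ι → ℝ}
    (hM : ∀ j y, |deriv (fun t : ℝ => f (mul y (t • (Pi.single j 1 : ι → ℝ)))) 0| ≤ M j)
    {u : ι → ℝ} (hu : ‖u‖ ≤ 1) :
    |f (dilate v r u) - f 0| ≤ C * ∑ j, r ^ v j * M j := by
  have hXj : ∀ j y, |deriv (fun t : ℝ => f (dilate v r (mul y (t • Pi.single j 1)))) 0| ≤
      r ^ v j * M j := fun j y => by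
    rw [deriv_comp_dilate_mul hdil, abs_mul, abs_of_pos (by positivity)]
    gcongr
    exact hM j _
  simpa using hlocal (f ∘ dilate v r) (hf.comp (contDiff_dilate r)) _ hXj u hu

end Dilation

/-- Mean value inequality on a homogeneous group: there is a constant `C > 0` such
that for every `C¹` function `f` and every `x`,
`|f(x) − f(0)| ≤ C Σ_j |x|^{v_j} sup_y |X_j f(y)|`, where
`X_j f (y) = d/dt f(y · exp(t X_j))|_{t=0}` are the left-invariant vector fields
of a basis adapted to the gradation. -/
theorem stmt_6 (n : ℕ) (v : Fin n → ℝ) (hv : ∀ j, 0 < v j)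
    (mul : (Fin n → ℝ) → (Fin n → ℝ) → (Fin n → ℝ))
    (hmulsmooth : ContDiff ℝ (⊤ : ℕ∞) fun p : (Fin n → ℝ) × (Fin n → ℝ) => mul p.1 p.2)
    (hassoc : ∀ x y z, mul (mul x y) z = mul x (mul y z))
    (hone : ∀ x, mul x 0 = x ∧ mul 0 x = x)
    (hinv : ∀ x, mul x (-x) = 0 ∧ mul (-x) x = 0)
    (hdil : ∀ r : ℝ, 0 < r → ∀ x y,
      (fun j => r ^ v j * mul x y j) =
        mul (fun j => r ^ v j * x j) (fun j => r ^ v j * y j))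
    (N : (Fin n → ℝ) → ℝ) (hNc : Continuous N) (hNnn : ∀ x, 0 ≤ N x)
    (hN0 : ∀ x, N x = 0 ↔ x = 0)
    (hNh : ∀ r : ℝ, 0 < r → ∀ x, N (fun j => r ^ v j * x j) = r * N x) :
    ∃ C : ℝ, 0 < C ∧ ∀ f : (Fin n → ℝ) → ℝ, ContDiff ℝ 1 f →
      ∀ M : Fin n → ℝ,
        (∀ j : Fin n, ∀ y : Fin n → ℝ,
          |deriv (fun t : ℝ => f (mul y (t • (Pi.single j 1 : Fin n → ℝ)))) 0| ≤ M j) →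
        ∀ x : Fin n → ℝ, |f x - f 0| ≤ C * ∑ j, N x ^ v j * M j := by
  obtain ⟨C, hC, hlocal⟩ := exists_abs_sub_le_of_norm_le_one
    (hmulsmooth.of_le (by exact_mod_cast le_top)) hassoc hone hinv
  obtain ⟨m, hm, hsmall⟩ := exists_pos_norm_le_one_of_lt hv N hNc hNnn hN0 hNh
  set K := 1 + ∑ j, (2 / m) ^ v j
  have hK : ∀ j, (2 / m) ^ v j ≤ K := fun j =>
    le_add_of_nonneg_of_le zero_le_one
      (single_le_sum (f := fun i => (2 / m) ^ v i) (fun i _ => by positivity) (mem_univ j))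
  refine ⟨C * K, by positivity, fun f hf M hM x => ?_⟩
  have hM0 : ∀ j, 0 ≤ M j := fun j => (abs_nonneg _).trans (hM j 0)
  rcases eq_or_ne x 0 with rfl | hx
  · rw [sub_self, abs_zero]
    exact mul_nonneg (by positivity)
      (sum_nonneg fun j _ => mul_nonneg (Real.rpow_nonneg (hNnn 0) _) (hM0 j))
  have hNx : 0 < N x := (hNnn x).lt_of_ne' fun h => hx ((hN0 x).mp h)
  set r := 2 / m * N x with hr_def
  have hr : 0 < r := by positivity
  have hu : ‖dilate v r⁻¹ x‖ ≤ 1 := hsmall _ <| calc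
    N (dilate v r⁻¹ x) = r⁻¹ * N x := hNh _ (inv_pos.mpr hr) x
    _ = m / 2 := by rw [hr_def]; field_simp
    _ < m := half_lt_self hm
  calc |f x - f 0| = |f (dilate v r (dilate v r⁻¹ x)) - f 0| := by
        rw [dilate_dilate hr.le (inv_nonneg.mpr hr.le), mul_inv_cancel₀ hr.ne', dilate_one_left]
    _ ≤ C * ∑ j, r ^ v j * M j := abs_comp_dilate_sub_le hr (hdil r hr) hlocal hf hM hu
    _ ≤ C * ∑ j, K * N x ^ v j * M j := by
        gcongr with j
        · exact hM0 j
        rw [Real.mul_rpow (by positivity) hNx.le]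
        exact mul_le_mul_of_nonneg_right (hK j) (Real.rpow_nonneg hNx.le _)
    _ = C * K * ∑ j, N x ^ v j * M j := by simp only [mul_sum, mul_assoc]
end
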